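/- Let (M, 𝓛) be a finite linear space in which every line is either affine or projective, and suppose there exists an affine line with exactly q points. Then every line of 𝓛 has exactly q or q + 1 points; moreover, a line is affine if and only if it has exactly q points, and projective if and only if it has exactly q + 1 points. -/

import Mathlib

/-!
Pick a point `p` off both the line `L` and the affine line `A`; two lines never cover the space,
since a third line meets each of them at most once but has three points. For a line `L ∌ p`,
joining `p` to the points of `L` is a bijection onto the lines through `p` that meet `L`, so the
pencil at `p` has `|L| + 1` lines when `L` is affine (one extra parallel) and `|L|` when `L` is
projective. Through `A` the pencil has `q + 1` lines, which pins `|L|` to `q` or `q + 1`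
according to the type of `L`.
-/

/-- A linear space: a point set `M` together with a collection of lines (subsets of `M`)
such that every line has at least 3 points, any two distinct points lie on exactly one
common line, and every point lies on at least 3 lines. -/
structure LinearSpace (M : Type*) where
  lines : Set (Set M)
  exists_three_points : ∀ L ∈ lines, ∃ a b c : M,
    a ∈ L ∧ b ∈ L ∧ c ∈ L ∧ a ≠ b ∧ a ≠ c ∧ b ≠ c
  join_unique : ∀ p q : M, p ≠ q → ∃! L, L ∈ lines ∧ p ∈ L ∧ q ∈ L
  exists_three_lines : ∀ p : M, ∃ L₁ L₂ L₃, L₁ ∈ lines ∧ L₂ ∈ lines ∧ L₃ ∈ lines ∧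
    p ∈ L₁ ∧ p ∈ L₂ ∧ p ∈ L₃ ∧ L₁ ≠ L₂ ∧ L₁ ≠ L₃ ∧ L₂ ≠ L₃

namespace LinearSpace

variable {M : Type*}

/-- Two lines are parallel if they are equal or disjoint. -/
def Parallel (L K : Set M) : Prop := L = K ∨ L ∩ K = ∅

/-- A line `L` is affine if for every point `p ∉ L` there is exactly one line
through `p` disjoint from `L`. -/
def IsAffine (S : LinearSpace M) (L : Set M) : Prop :=
  L ∈ S.lines ∧ ∀ p ∉ L, ∃! K, K ∈ S.lines ∧ p ∈ K ∧ K ∩ L = ∅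

/-- A line is projective if it meets every other line. -/
def IsProjective (S : LinearSpace M) (L : Set M) : Prop :=
  L ∈ S.lines ∧ ∀ K ∈ S.lines, K ≠ L → (L ∩ K).Nonempty

/-- An affine line is biaffine if every line parallel to it is also affine. -/
def IsBiaffine (S : LinearSpace M) (L : Set M) : Prop :=
  S.IsAffine L ∧ ∀ K ∈ S.lines, Parallel K L → S.IsAffine K


noncomputable def join (S : LinearSpace M) {p q : M} (hpq : p ≠ q) : Set M :=
  (S.join_unique p q hpq).exists.choose

def pencil (S : LinearSpace M) (p : M) : Set (Set M) :=
  {K | K ∈ S.lines ∧ p ∈ K}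

variable (S : LinearSpace M)

section Join

variable {p q : M} (hpq : p ≠ q)

theorem join_mem_lines : S.join hpq ∈ S.lines :=
  (S.join_unique p q hpq).exists.choose_spec.1

theorem left_mem_join : p ∈ S.join hpq :=
  (S.join_unique p q hpq).exists.choose_spec.2.1

theorem right_mem_join : q ∈ S.join hpq :=
  (S.join_unique p q hpq).exists.choose_spec.2.2

theorem eq_join {L : Set M} (hL : L ∈ S.lines) (hpL : p ∈ L) (hqL : q ∈ L) : L = S.join hpq :=
  (S.join_unique p q hpq).unique ⟨hL, hpL, hqL⟩
    ⟨S.join_mem_lines hpq, S.left_mem_join hpq, S.right_mem_join hpq⟩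

end Join

theorem eq_of_mem_of_mem {L K : Set M} (hL : L ∈ S.lines) (hK : K ∈ S.lines) {a b : M}
    (hab : a ≠ b) (haL : a ∈ L) (hbL : b ∈ L) (haK : a ∈ K) (hbK : b ∈ K) : L = K :=
  (S.eq_join hab hL haL hbL).trans (S.eq_join hab hK haK hbK).symm

theorem inter_subsingleton {L K : Set M} (hL : L ∈ S.lines) (hK : K ∈ S.lines) (hLK : L ≠ K) :
    (L ∩ K).Subsingleton := by
  intro a ha b hb
  by_contra hab
  exact hLK (S.eq_of_mem_of_mem hL hK hab ha.1 hb.1 ha.2 hb.2)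

theorem three_le_encard {L : Set M} (hL : L ∈ S.lines) : 3 ≤ L.encard := by
  obtain ⟨a, b, c, ha, hb, hc, hab, hac, hbc⟩ := S.exists_three_points L hL
  calc (3 : ℕ∞) = ({a, b, c} : Set M).encard :=
        (Set.encard_eq_three.2 ⟨a, b, c, hab, hac, hbc, rfl⟩).symm
    _ ≤ L.encard := Set.encard_le_encard (by grind)

theorem exists_line_ne_ne (p : M) (L K : Set M) :
    ∃ N ∈ S.lines, p ∈ N ∧ N ≠ L ∧ N ≠ K := by
  obtain ⟨L₁, L₂, L₃, h₁, h₂, h₃, hp₁, hp₂, hp₃, h₁₂, h₁₃, h₂₃⟩ := S.exists_three_lines p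
  by_cases e₁ : L₁ ≠ L ∧ L₁ ≠ K
  · exact ⟨L₁, h₁, hp₁, e₁⟩
  by_cases e₂ : L₂ ≠ L ∧ L₂ ≠ K
  · exact ⟨L₂, h₂, hp₂, e₂⟩
  exact ⟨L₃, h₃, hp₃, by grind⟩

theorem exists_notMem_notMem {L K : Set M} (hL : L ∈ S.lines) (hK : K ∈ S.lines) :
    ∃ p, p ∉ L ∧ p ∉ K := by
  obtain ⟨a, -, -, -, -, -, -, -, -⟩ := S.exists_three_points L hL
  obtain ⟨N, hN, -, hNL, hNK⟩ := S.exists_line_ne_ne a L K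
  have hmeet : (N ∩ (L ∪ K)).encard < N.encard :=
    calc (N ∩ (L ∪ K)).encard ≤ (N ∩ L).encard + (N ∩ K).encard := by
          rw [Set.inter_union_distrib_left]; exact Set.encard_union_le _ _
      _ ≤ 1 + 1 := add_le_add
          (Set.encard_le_one_iff_subsingleton.2 (S.inter_subsingleton hN hL hNL))
          (Set.encard_le_one_iff_subsingleton.2 (S.inter_subsingleton hN hK hNK))
      _ < 3 := by norm_num
      _ ≤ N.encard := S.three_le_encard hN
  by_contra! hcover
  have hsub : N ⊆ L ∪ K := fun x _ => by by_cases hx : x ∈ L <;> simp [hx, hcover]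
  exact (Set.inter_eq_left.2 hsub ▸ hmeet).false

theorem ncard_pencil_inter_nonempty {L : Set M} (hL : L ∈ S.lines) {p : M} (hp : p ∉ L) :
    {K ∈ S.pencil p | (K ∩ L).Nonempty}.ncard = L.ncard := by
  have hne : ∀ x ∈ L, p ≠ x := fun x hx e => hp (e ▸ hx)
  symm
  refine Set.ncard_congr (fun x hx => S.join (hne x hx)) ?_ ?_ ?_
  · exact fun x hx => ⟨⟨S.join_mem_lines _, S.left_mem_join _⟩, x, S.right_mem_join _, hx⟩
  · intro x y hx hy hxy
    by_contra hxy'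
    have hL_eq : L = S.join (hne x hx) := S.eq_of_mem_of_mem hL (S.join_mem_lines _) hxy' hx hy
      (S.right_mem_join _) (hxy ▸ S.right_mem_join _)
    exact hp (hL_eq ▸ S.left_mem_join _)
  · rintro K ⟨⟨hK, hpK⟩, x, hxK, hxL⟩
    exact ⟨x, hxL, (S.eq_join (hne x hxL) hK hpK hxK).symm⟩

theorem ncard_pencil_of_isAffine [Finite M] {L : Set M} (hL : S.IsAffine L) {p : M} (hp : p ∉ L) :
    (S.pencil p).ncard = L.ncard + 1 := by
  obtain ⟨N, ⟨hN, hpN, hNL⟩, hNu⟩ := hL.2 p hp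
  have hsplit : S.pencil p = insert N {K ∈ S.pencil p | (K ∩ L).Nonempty} := by
    ext K
    refine ⟨fun hKp => ?_, ?_⟩
    · rcases (K ∩ L).eq_empty_or_nonempty with hKL | hKL
      · exact .inl (hNu K ⟨hKp.1, hKp.2, hKL⟩)
      · exact .inr ⟨hKp, hKL⟩
    · rintro (rfl | ⟨hKp, -⟩)
      exacts [⟨hN, hpN⟩, hKp]
  have hN_notMem : N ∉ {K ∈ S.pencil p | (K ∩ L).Nonempty} := fun h => h.2.ne_empty hNL
  rw [hsplit, Set.ncard_insert_of_notMem hN_notMem, S.ncard_pencil_inter_nonempty hL.1 hp]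

theorem ncard_pencil_of_isProjective {L : Set M} (hL : S.IsProjective L) {p : M} (hp : p ∉ L) :
    (S.pencil p).ncard = L.ncard := by
  have hmeet : {K ∈ S.pencil p | (K ∩ L).Nonempty} = S.pencil p :=
    Set.sep_eq_self_iff_mem_true.2 fun K hKp =>
      Set.inter_comm L K ▸ hL.2 K hKp.1 fun e => hp (e ▸ hKp.2)
  rw [← hmeet, S.ncard_pencil_inter_nonempty hL.1 hp]

end LinearSpace

open LinearSpace

/-- In a finite linear space in which every line is affine or projective, if there is
an affine line with exactly `q` points, then every line has `q` or `q + 1` points;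
a line is affine iff it has `q` points and projective iff it has `q + 1` points. -/
theorem line_card_dichotomy {M : Type*} [Finite M] (S : LinearSpace M)
    (hdich : ∀ L ∈ S.lines, S.IsAffine L ∨ S.IsProjective L)
    (A : Set M) (hA : S.IsAffine A) (q : ℕ) (hcard : A.ncard = q) :
    ∀ L ∈ S.lines, (L.ncard = q ∨ L.ncard = q + 1) ∧
      (S.IsAffine L ↔ L.ncard = q) ∧ (S.IsProjective L ↔ L.ncard = q + 1) := by
  intro L hL
  obtain ⟨p, hpL, hpA⟩ := S.exists_notMem_notMem hL hA.1
  have hpencil : (S.pencil p).ncard = q + 1 := hcard ▸ S.ncard_pencil_of_isAffine hA hpA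
  have haff : S.IsAffine L → L.ncard = q := fun h => by
    have := S.ncard_pencil_of_isAffine h hpL
    omega
  have hproj : S.IsProjective L → L.ncard = q + 1 := fun h => by
    have := S.ncard_pencil_of_isProjective h hpL
    omega
  rcases hdich L hL with h | h
  · have := haff h
    grind
  · have := hproj h
    grind
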